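/- Lower bound in the equality-testing reduction graph: Fix n ≥ 1 and A, B ⊆ [n] with A ≠ B, and let H be the equality-testing graph for (A, B) with heavy-edge weight W = ρ·(2n + 2) + 1 for some ρ ≥ 1. Then every edge subset F of H in which a_i is connected to b_i (by a path within F) for every i ∈ [n] must contain at least one heavy edge ({a₊, b₋} or {a₋, b₊}); consequently, its total cost satisfies Σ_{e ∈ F} c(e) > ρ·(2n + 2). -/
import Mathlib


/-- Vertices of the equality-testing graph: `a i`, `b i` for `i ∈ [n]`,
plus the four special vertices `a₊, a₋, b₊, b₋`. -/
inductive ETVertex (n : ℕ) where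
  | a (i : Fin n)
  | b (i : Fin n)
  | aplus
  | aminus
  | bplus
  | bminus
deriving DecidableEq

/-- Alice's edges: `{a₊, a i}` for `i ∈ A` and `{a₋, a i}` for `i ∉ A`. -/
def EA (n : ℕ) (A : Finset (Fin n)) : Finset (Sym2 (ETVertex n)) :=
  A.image (fun i => s(ETVertex.aplus, ETVertex.a i)) ∪
    Aᶜ.image (fun i => s(ETVertex.aminus, ETVertex.a i))

/-- Bob's edges: `{b₊, b i}` for `i ∈ B` and `{b₋, b i}` for `i ∉ B`. -/
def EB (n : ℕ) (B : Finset (Fin n)) : Finset (Sym2 (ETVertex n)) :=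
  B.image (fun i => s(ETVertex.bplus, ETVertex.b i)) ∪
    Bᶜ.image (fun i => s(ETVertex.bminus, ETVertex.b i))

/-- The four cross edges between Alice's and Bob's special vertices. -/
def EAB (n : ℕ) : Finset (Sym2 (ETVertex n)) :=
  {s(ETVertex.aplus, ETVertex.bplus), s(ETVertex.aplus, ETVertex.bminus),
    s(ETVertex.aminus, ETVertex.bplus), s(ETVertex.aminus, ETVertex.bminus)}

/-- Edge costs: the two heavy edges `{a₊, b₋}` and `{a₋, b₊}` cost `W`,
all other edges cost `1`. -/
def ETcost (n W : ℕ) (e : Sym2 (ETVertex n)) : ℕ :=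
  if e = s(ETVertex.aplus, ETVertex.bminus) ∨ e = s(ETVertex.aminus, ETVertex.bplus)
    then W else 1


/-- Two-coloring of vertices used to show a heavy edge is needed. -/
def ETcolor {n : ℕ} (A B : Finset (Fin n)) : ETVertex n → Bool
  | ETVertex.a i => i ∈ A
  | ETVertex.b i => i ∈ B
  | ETVertex.aplus => true
  | ETVertex.aminus => false
  | ETVertex.bplus => true
  | ETVertex.bminus => false

lemma ETcolor_eq {n : ℕ} (A B : Finset (Fin n)) (u v : ETVertex n)
    (he : s(u, v) ∈ EA n A ∪ EB n B ∪ EAB n)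
    (h1 : s(u, v) ≠ s(ETVertex.aplus, ETVertex.bminus))
    (h2 : s(u, v) ≠ s(ETVertex.aminus, ETVertex.bplus)) :
    ETcolor A B u = ETcolor A B v := by
  simp only [EA, EB, EAB, Finset.mem_union, Finset.mem_image, Finset.mem_compl,
    Finset.mem_insert, Finset.mem_singleton] at he
  rcases he with ((⟨i, hi, h⟩ | ⟨i, hi, h⟩) | (⟨i, hi, h⟩ | ⟨i, hi, h⟩)) | (h | h | h | h)
  · rw [Sym2.eq_iff] at h
    rcases h with ⟨rfl, rfl⟩ | ⟨rfl, rfl⟩ <;> simp [ETcolor, hi]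
  · rw [Sym2.eq_iff] at h
    rcases h with ⟨rfl, rfl⟩ | ⟨rfl, rfl⟩ <;> simp [ETcolor, hi]
  · rw [Sym2.eq_iff] at h
    rcases h with ⟨rfl, rfl⟩ | ⟨rfl, rfl⟩ <;> simp [ETcolor, hi]
  · rw [Sym2.eq_iff] at h
    rcases h with ⟨rfl, rfl⟩ | ⟨rfl, rfl⟩ <;> simp [ETcolor, hi]
  · rw [Sym2.eq_iff] at h
    rcases h with ⟨rfl, rfl⟩ | ⟨rfl, rfl⟩ <;> simp [ETcolor]
  · exact absurd h h1
  · exact absurd h h2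
  · rw [Sym2.eq_iff] at h
    rcases h with ⟨rfl, rfl⟩ | ⟨rfl, rfl⟩ <;> simp [ETcolor]

/-- Lower bound in the equality-testing reduction graph: if
`A ≠ B` and the heavy-edge weight is `W = ρ·(2n + 2) + 1` with `ρ ≥ 1`, then any
edge subset `F` of the equality-testing graph connecting `a i` to `b i` for
every `i ∈ [n]` contains a heavy edge, and hence its total cost exceeds
`ρ·(2n + 2)`. -/
theorem et_graph_lower_bound (n : ℕ) (hn : 1 ≤ n) (A B : Finset (Fin n))
    (hAB : A ≠ B) (ρ : ℕ) (hρ : 1 ≤ ρ) (W : ℕ) (hW : W = ρ * (2 * n + 2) + 1)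
    (F : Finset (Sym2 (ETVertex n)))
    (hFE : F ⊆ EA n A ∪ EB n B ∪ EAB n)
    (hconn : ∀ i : Fin n,
      (SimpleGraph.fromEdgeSet (F : Set (Sym2 (ETVertex n)))).Reachable
        (ETVertex.a i) (ETVertex.b i)) :
    (s(ETVertex.aplus, ETVertex.bminus) ∈ F ∨
        s(ETVertex.aminus, ETVertex.bplus) ∈ F) ∧
      ρ * (2 * n + 2) < ∑ e ∈ F, ETcost n W e := by
  have hheavy : s(ETVertex.aplus, ETVertex.bminus) ∈ F ∨
      s(ETVertex.aminus, ETVertex.bplus) ∈ F := by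
    by_contra hcon
    push_neg at hcon
    obtain ⟨hc1, hc2⟩ := hcon
    -- color is preserved along F-edges
    have key : ∀ u v : ETVertex n,
        (SimpleGraph.fromEdgeSet (F : Set (Sym2 (ETVertex n)))).Reachable u v →
        ETcolor A B u = ETcolor A B v := by
      intro u v h
      obtain ⟨w⟩ := h
      induction w with
      | nil => rfl
      | cons hadj p ih =>
        rw [SimpleGraph.fromEdgeSet_adj] at hadj
        obtain ⟨hmem, hne⟩ := hadj
        refine (ETcolor_eq A B _ _ (hFE hmem) ?_ ?_).trans ih
        · intro heq; exact hc1 (by simpa using heq ▸ hmem)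
        · intro heq; exact hc2 (by simpa using heq ▸ hmem)
    -- find an index where A and B differ
    have hex : ∃ i : Fin n, ¬((i ∈ A) ↔ (i ∈ B)) := by
      by_contra hall
      push_neg at hall
      exact hAB (Finset.ext fun i => hall i)
    obtain ⟨i, hi⟩ := hex
    have hk := key _ _ (hconn i)
    simp only [ETcolor] at hk
    exact hi (by simpa [decide_eq_decide] using hk)
  refine ⟨hheavy, ?_⟩
  obtain he | he := hheavy
  all_goals
    have hle : W ≤ ∑ e ∈ F, ETcost n W e := by
      have := Finset.single_le_sum (f := ETcost n W) (fun e _ => Nat.zero_le _) he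
      simpa [ETcost] using this
    omega
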